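/- The harmonic edit distance satisfies the triangle inequality: for all lists A, B, C, d(A,C) ≤ d(A,B) + d(B,C). -/

import Mathlib

open List

noncomputable def H (n : ℕ) : ℝ := ∑ i ∈ Finset.range n, (1 : ℝ) / (i + 1)

noncomputable def lcsLen {α : Type*} (A B : List α) : ℕ :=
  sSup {n : ℕ | ∃ L : List α, L.Sublist A ∧ L.Sublist B ∧ L.length = n}

noncomputable def d {α : Type*} (A B : List α) : ℝ :=
  2 * H (A.length + B.length - lcsLen A B) - H A.length - H B.length

/-!
Write `a, b, c` for the lengths and `ℓ_XY` for the LCS lengths. Unfolding `d`, the triangle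
inequality becomes `H (a + c - ℓ_AC) + H b ≤ H (b + (a - ℓ_AB)) + H (b + (c - ℓ_BC))`.
Two longest common sublists `A ⊇ L₁ ⊆ B` and `B ⊇ L₂ ⊆ C` overlap inside `B` in a common sublist
of length at least `ℓ_AB + ℓ_BC - b`, which is common to `A` and `C`; hence
`a + c - ℓ_AC ≤ b + (a - ℓ_AB) + (c - ℓ_BC)`. The claim then follows from monotonicity of `H`
and its concavity `H (b + x + y) + H b ≤ H (b + x) + H (b + y)`.
-/

lemma H_monotone : Monotone H := fun _ _ h =>
  Finset.sum_le_sum_of_subset_of_nonneg (Finset.range_subset_range.2 h)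
    fun _ _ _ => by positivity

lemma H_add (n k : ℕ) : H (n + k) = H n + ∑ j ∈ Finset.range k, (1 : ℝ) / (n + j + 1) := by
  rw [H, Finset.sum_range_add, H]
  push_cast
  simp only [add_assoc]

lemma H_add_sub_H_antitone (k : ℕ) : Antitone fun n => H (n + k) - H n := by
  intro m n hmn
  simp only [H_add, add_sub_cancel_left]
  gcongr

lemma H_add_add_add_le (n x y : ℕ) : H (n + x + y) + H n ≤ H (n + x) + H (n + y) := by
  have := H_add_sub_H_antitone y (Nat.le_add_right n x)
  linarith

section LCS

variable {α : Type*}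

lemma bddAbove_commonSublist_lengths (A B : List α) :
    BddAbove {n : ℕ | ∃ L : List α, L.Sublist A ∧ L.Sublist B ∧ L.length = n} :=
  ⟨A.length, fun _ ⟨_, hA, _, hn⟩ => hn ▸ hA.length_le⟩

lemma exists_sublist_length_eq_lcsLen (A B : List α) :
    ∃ L : List α, L.Sublist A ∧ L.Sublist B ∧ L.length = lcsLen A B :=
  Nat.sSup_mem (s := {n | ∃ L : List α, L.Sublist A ∧ L.Sublist B ∧ L.length = n})
    ⟨0, [], nil_sublist A, nil_sublist B, rfl⟩ (bddAbove_commonSublist_lengths A B)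

lemma length_le_lcsLen {A B L : List α} (hA : L.Sublist A) (hB : L.Sublist B) :
    L.length ≤ lcsLen A B :=
  le_csSup (bddAbove_commonSublist_lengths A B) ⟨L, hA, hB, rfl⟩

lemma lcsLen_le_length_left (A B : List α) : lcsLen A B ≤ A.length := by
  obtain ⟨L, hA, -, hL⟩ := exists_sublist_length_eq_lcsLen A B
  exact hL ▸ hA.length_le

lemma lcsLen_le_length_right (A B : List α) : lcsLen A B ≤ B.length := by
  obtain ⟨L, -, hB, hL⟩ := exists_sublist_length_eq_lcsLen A B
  exact hL ▸ hB.length_le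

lemma exists_common_sublist_of_sublist {B L₁ L₂ : List α} (h₁ : L₁.Sublist B)
    (h₂ : L₂.Sublist B) :
    ∃ M : List α, M.Sublist L₁ ∧ M.Sublist L₂ ∧ L₁.length + L₂.length ≤ M.length + B.length := by
  induction B generalizing L₁ L₂ with
  | nil =>
    rw [sublist_nil] at h₁ h₂
    subst h₁ h₂
    exact ⟨[], Sublist.refl _, Sublist.refl _, le_rfl⟩
  | cons b B ih =>
    rcases sublist_cons_iff.1 h₁ with h₁' | ⟨L₁, rfl, h₁'⟩ <;>
      rcases sublist_cons_iff.1 h₂ with h₂' | ⟨L₂, rfl, h₂'⟩ <;>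
      obtain ⟨M, hM₁, hM₂, hM⟩ := ih h₁' h₂' <;> simp only [length_cons] at hM ⊢
    · exact ⟨M, hM₁, hM₂, by omega⟩
    · exact ⟨M, hM₁, hM₂.trans (sublist_cons_self _ _), by omega⟩
    · exact ⟨M, hM₁.trans (sublist_cons_self _ _), hM₂, by omega⟩
    · exact ⟨b :: M, hM₁.cons_cons _, hM₂.cons_cons _, by simp only [length_cons]; omega⟩

lemma lcsLen_add_lcsLen_le (A B C : List α) :
    lcsLen A B + lcsLen B C ≤ lcsLen A C + B.length := by
  obtain ⟨L₁, h₁A, h₁B, h₁⟩ := exists_sublist_length_eq_lcsLen A B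
  obtain ⟨L₂, h₂B, h₂C, h₂⟩ := exists_sublist_length_eq_lcsLen B C
  obtain ⟨M, hM₁, hM₂, hM⟩ := exists_common_sublist_of_sublist h₁B h₂B
  have := length_le_lcsLen (hM₁.trans h₁A) (hM₂.trans h₂C)
  omega

end LCS

theorem stmt13 {α : Type*} (A B C : List α) : d A C ≤ d A B + d B C := by
  have hAB := lcsLen_le_length_left A B
  have hBC := lcsLen_le_length_right B C
  have hABC := lcsLen_add_lcsLen_le A B C
  have key : H (A.length + C.length - lcsLen A C) + H B.length
      ≤ H (A.length + B.length - lcsLen A B) + H (B.length + C.length - lcsLen B C) :=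
    calc _ ≤ H (B.length + (A.length - lcsLen A B) + (C.length - lcsLen B C)) + H B.length :=
          add_le_add_left (H_monotone (by omega)) _
      _ ≤ H (B.length + (A.length - lcsLen A B)) + H (B.length + (C.length - lcsLen B C)) :=
          H_add_add_add_le _ _ _
      _ = _ := by congr 2 <;> omega
  simp only [d]
  linarith
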